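/- arXiv:1703.00972 — 2 statements merged into one kernel-verified Lean document; each statement's English description precedes it below -/
import Mathlib

section
/- (Individual rationality of the DR mechanism.) In the DR mechanism setting, suppose that for each user i there is a strictly monotonically increasing expected-utility function μ_i : ℝ → ℝ with μ_i(r̃_i) = 0, and suppose j_max exists and j(i) exists for every i ∈ T. Then every targeted user i ∈ T receives expected utility μ_i(r̃_{j(i)}) ≥ 0, while every non-targeted user receives expected utility 0; hence participation in the mechanism yields expected utility at least that of the outside option (zero) for every user. -/
/-! A targeted user `i` is paid `rt (ji i)` with `i ≤ ji i`: were `ji i < i`, removing `i` would not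
change the sum up to `ji i`, so `ji i` would already reach the target and precede `jmax ≥ i`.
Monotonicity of `rt` and of `μ i` then gives `0 = μ i (rt i) ≤ μ i (rt (ji i))`. -/

open Finset

theorem le_of_le_sum_erase {α β : Type*} [LinearOrder α] [LocallyFiniteOrderBot α]
    [AddCommMonoid β] [LE β] {g : α → α → β} {M : β} {jmax i k : α}
    (hjmax : jmax ∈ lowerBounds {j | M ≤ ∑ s ∈ Iic j, g s j})
    (hk : M ≤ ∑ s ∈ (Iic k).erase i, g s k) (hi : i ≤ jmax) : i ≤ k := by
  by_contra! hki
  have hnotMem : i ∉ Iic k := by simpa using hki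
  rw [erase_eq_of_notMem hnotMem] at hk
  exact (hi.trans (hjmax hk)).not_gt hki

theorem dr_mechanism_individually_rational_general
    (n : ℕ) (rt : Fin n → ℝ) (hr : Monotone rt)
    (δ : Fin n → ℝ → ℝ) (M : ℝ)
    (μ : Fin n → ℝ → ℝ)
    (hμmono : ∀ i, StrictMono (μ i)) (hμzero : ∀ i, μ i (rt i) = 0)
    (jmax : Fin n)
    (hjmax : IsLeast {j : Fin n | M ≤ ∑ s ∈ Finset.Iic j, δ s (rt j)} jmax)
    (ji : Fin n → Fin n)
    (hji : ∀ i : Fin n, i ≤ jmax → IsLeast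
      {k : Fin n | M ≤ ∑ s ∈ (Finset.Iic k).erase i, δ s (rt k)} (ji i)) :
    (∀ i : Fin n, i ≤ jmax → 0 ≤ μ i (rt (ji i))) ∧
      (∀ i : Fin n, 0 ≤ if i ≤ jmax then μ i (rt (ji i)) else 0) := by
  have targeted : ∀ i : Fin n, i ≤ jmax → 0 ≤ μ i (rt (ji i)) := by
    intro i hi
    have hle : i ≤ ji i := le_of_le_sum_erase hjmax.2 (hji i hi).1 hi
    calc 0 = μ i (rt i) := (hμzero i).symm
      _ ≤ μ i (rt (ji i)) := (hμmono i).monotone (hr hle)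
  refine ⟨targeted, fun i => ?_⟩
  split_ifs with hi
  exacts [targeted i hi, le_rfl]

/-- Individual rationality of the DR mechanism: every targeted
user `i ≤ j_max` receives expected utility `μ_i (rt_{j(i)}) ≥ 0`, while every
non-targeted user receives expected utility `0`; hence participation yields
expected utility at least the outside option (zero) for every user. -/
theorem dr_mechanism_individually_rational
    (n : ℕ) (rt : Fin n → ℝ) (hr : Monotone rt)
    (δ : Fin n → ℝ → ℝ) (hδ : ∀ i, Monotone (δ i))
    (hδ0 : ∀ i, 0 ≤ δ i (rt i)) (M : ℝ)
    (μ : Fin n → ℝ → ℝ)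
    (hμmono : ∀ i, StrictMono (μ i)) (hμzero : ∀ i, μ i (rt i) = 0)
    (jmax : Fin n)
    (hjmax : IsLeast {j : Fin n | M ≤ ∑ s ∈ Finset.Iic j, δ s (rt j)} jmax)
    (ji : Fin n → Fin n)
    (hji : ∀ i : Fin n, i ≤ jmax → IsLeast
      {k : Fin n | M ≤ ∑ s ∈ (Finset.Iic k).erase i, δ s (rt k)} (ji i)) :
    (∀ i : Fin n, i ≤ jmax → 0 ≤ μ i (rt (ji i))) ∧
      (∀ i : Fin n, 0 ≤ if i ≤ jmax then μ i (rt (ji i)) else 0) :=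
  dr_mechanism_individually_rational_general n rt hr δ M μ hμmono hμzero jmax hjmax ji hji
end

section
/- (Non-targeted users cannot profit by misreporting.) In the DR mechanism setting, suppose j_max exists, and fix a user i with i > j_max (so i is not targeted under truthful reports). Replace user i's pair (r̃_i, δ_i) by an arbitrary report (z, δ') with δ' : ℝ → ℝ nondecreasing and δ'(z) ≥ 0, keep all other users' pairs unchanged, and relabel the n pairs so that their thresholds are again ascending. If the mechanism run on this modified profile includes the relabeled user i in its target set and assigns her reward ρ, then ρ ≤ r̃_{j_max} ≤ r̃_i. Consequently, if μ_i : ℝ → ℝ is strictly monotonically increasing with μ_i(r̃_i) = 0, then user i's expected utility μ_i(ρ) from any such misreport is at most 0, which equals her expected utility under truthful reporting. -/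
/-!
The deviation of a non-targeted user `i > j_max` leaves the reports of the truthful targets
`1, …, j_max` untouched. After relabeling, let `k` be the last position occupied by one of them;
since the relabeled thresholds ascend, the threshold at `k` is exactly `r̃_{j_max}`. All reported
reductions are nonnegative at thresholds from their own onwards, so the sum up to `k` with user `i`
left out already contains the truthful sum at `j_max`, which reaches `M`. Hence `j(i) ≤ k` and
`ρ ≤ r̃_{j_max} ≤ r̃_i`.
-/

open Finset

theorem Finset.apply_max'_image_Iic_eq {ι κ β : Type*} [LinearOrder ι] [Preorder κ]
    [LocallyFiniteOrderBot κ] [PartialOrder β] {R : ι → β} {r : κ → β} {g : κ → ι}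
    (hR : Monotone R) (hr : Monotone r) {j : κ} (hg : ∀ t ≤ j, R (g t) = r t) :
    R (((Iic j).image g).max' (nonempty_Iic.image g)) = r j := by
  apply le_antisymm
  · obtain ⟨t, ht, hk⟩ := mem_image.1 (((Iic j).image g).max'_mem (nonempty_Iic.image g))
    rw [← hk, hg t (mem_Iic.1 ht)]
    exact hr (mem_Iic.1 ht)
  · rw [← hg j le_rfl]
    exact hR (le_max' _ _ (mem_image_of_mem g (mem_Iic.2 le_rfl)))

theorem Finset.sum_le_sum_erase_Iic_max' {ι M : Type*} [LinearOrder ι] [LocallyFiniteOrderBot ι]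
    [AddCommMonoid M] [PartialOrder M] [IsOrderedAddMonoid M] {A : Finset ι} (hA : A.Nonempty)
    {p : ι} (hp : p ∉ A) {f : ι → M} (hf : ∀ s ≤ A.max' hA, 0 ≤ f s) :
    ∑ s ∈ A, f s ≤ ∑ s ∈ (Iic (A.max' hA)).erase p, f s := by
  refine sum_le_sum_of_subset_of_nonneg (fun s hs => ?_) fun s hs _ => ?_
  · exact mem_erase.2 ⟨fun h => hp (h ▸ hs), mem_Iic.2 (A.le_max' s hs)⟩
  · exact hf s (mem_Iic.1 (mem_of_mem_erase hs))

theorem reported_reduction_monotone_and_nonneg {ι κ : Type*} [DecidableEq κ] (e : ι → κ) (i : κ)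
    {rt : κ → ℝ} {δ : κ → ℝ → ℝ} (hδ : ∀ t, Monotone (δ t)) (hδ0 : ∀ t, 0 ≤ δ t (rt t))
    {z : ℝ} {d : ℝ → ℝ} (hd : Monotone d) (hdz : 0 ≤ d z) (s : ι) :
    Monotone (if e s = i then d else δ (e s)) ∧
      0 ≤ (if e s = i then d else δ (e s)) (if e s = i then z else rt (e s)) := by
  split_ifs
  exacts [⟨hd, hdz⟩, ⟨hδ _, hδ0 _⟩]

theorem reduction_nonneg_of_le {ι : Type*} [Preorder ι] {R : ι → ℝ} {D : ι → ℝ → ℝ}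
    (hR : Monotone R) (hD : ∀ s, Monotone (D s) ∧ 0 ≤ D s (R s)) {s k : ι} (hsk : s ≤ k) :
    0 ≤ D s (R k) :=
  (hD s).2.trans ((hD s).1 (hR hsk))

theorem dr_mechanism_nontargeted_cannot_profit_by_misreporting_general
    (n : ℕ) (rt : Fin n → ℝ) (hr : Monotone rt)
    (δ : Fin n → ℝ → ℝ) (hδ : ∀ i, Monotone (δ i))
    (hδ0 : ∀ i, 0 ≤ δ i (rt i)) (M : ℝ)
    (jmax : Fin n)
    (hjmax : IsLeast {j : Fin n | M ≤ ∑ s ∈ Finset.Iic j, δ s (rt j)} jmax)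
    (i : Fin n) (hi : jmax < i)
    (z : ℝ) (d : ℝ → ℝ) (hd : Monotone d) (hdz : 0 ≤ d z)
    (e : Equiv.Perm (Fin n))
    (R : Fin n → ℝ) (hR : R = fun k => if e k = i then z else rt (e k))
    (D : Fin n → ℝ → ℝ) (hD : D = fun k => if e k = i then d else δ (e k))
    (hRmono : Monotone R)
    (p : Fin n) (hp : e p = i)
    (jp : Fin n)
    (hjp : IsLeast
      {k : Fin n | M ≤ ∑ s ∈ (Finset.Iic k).erase p, D s (R k)} jp)
    (ρ : ℝ) (hρ : ρ = R jp) :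
    ρ ≤ rt jmax ∧ rt jmax ≤ rt i ∧
      ∀ μi : ℝ → ℝ, StrictMono μi → μi (rt i) = 0 → μi ρ ≤ 0 := by
  have hne : ∀ t ≤ jmax, t ≠ i := fun t ht => (ht.trans_lt hi).ne
  have hRe : ∀ t ≤ jmax, R (e.symm t) = rt t := fun t ht => by simp [hR, hne t ht]
  have hDe : ∀ t ≤ jmax, D (e.symm t) = δ t := fun t ht => by simp [hD, hne t ht]
  have hDR : ∀ s, Monotone (D s) ∧ 0 ≤ D s (R s) := fun s => by
    subst hR hD
    exact reported_reduction_monotone_and_nonneg e i hδ hδ0 hd hdz s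
  set A := (Iic jmax).image e.symm
  have hA : A.Nonempty := nonempty_Iic.image _
  have hRk : R (A.max' hA) = rt jmax := apply_max'_image_Iic_eq hRmono hr hRe
  have hpA : p ∉ A := fun hpA => by
    obtain ⟨t, ht, rfl⟩ := mem_image.1 hpA
    exact hne t (mem_Iic.1 ht) (by simpa using hp)
  have hsum : M ≤ ∑ s ∈ (Iic (A.max' hA)).erase p, D s (R (A.max' hA)) := calc
    M ≤ ∑ t ∈ Iic jmax, δ t (rt jmax) := hjmax.1
    _ = ∑ s ∈ A, D s (R (A.max' hA)) := by
      rw [sum_image e.symm.injective.injOn, hRk]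
      exact sum_congr rfl fun t ht => by rw [hDe t (mem_Iic.1 ht)]
    _ ≤ _ := sum_le_sum_erase_Iic_max' hA hpA fun s hs => reduction_nonneg_of_le hRmono hDR hs
  have hρle : ρ ≤ rt jmax := hρ ▸ hRk ▸ hRmono (hjp.2 hsum)
  exact ⟨hρle, hr hi.le, fun μ hμ hμ0 => hμ0 ▸ hμ.monotone (hρle.trans (hr hi.le))⟩

/-- Non-targeted users cannot profit by misreporting: if user
`i > j_max` replaces her pair `(rt_i, δ_i)` by an arbitrary report `(z, d)`
and the profile is relabeled (via the permutation `e`) so thresholds again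
ascend, then whenever the mechanism on the modified profile targets the
relabeled user `i` (at position `p`) and assigns her reward `ρ`, one has
`ρ ≤ rt_{j_max} ≤ rt_i`; consequently, for any strictly increasing expected
utility `μ_i` with `μ_i (rt_i) = 0`, her expected utility `μ_i ρ` is at most
`0`, her expected utility under truthful reporting. -/
theorem dr_mechanism_nontargeted_cannot_profit_by_misreporting
    (n : ℕ) (rt : Fin n → ℝ) (hr : Monotone rt)
    (δ : Fin n → ℝ → ℝ) (hδ : ∀ i, Monotone (δ i))
    (hδ0 : ∀ i, 0 ≤ δ i (rt i)) (M : ℝ)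
    (jmax : Fin n)
    (hjmax : IsLeast {j : Fin n | M ≤ ∑ s ∈ Finset.Iic j, δ s (rt j)} jmax)
    (i : Fin n) (hi : jmax < i)
    (z : ℝ) (d : ℝ → ℝ) (hd : Monotone d) (hdz : 0 ≤ d z)
    (e : Equiv.Perm (Fin n))
    (R : Fin n → ℝ) (hR : R = fun k => if e k = i then z else rt (e k))
    (D : Fin n → ℝ → ℝ) (hD : D = fun k => if e k = i then d else δ (e k))
    (hRmono : Monotone R)
    (p : Fin n) (hp : e p = i)
    (jmax' : Fin n)
    (hjmax' : IsLeast {j : Fin n | M ≤ ∑ s ∈ Finset.Iic j, D s (R j)} jmax')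
    (hptargeted : p ≤ jmax')
    (jp : Fin n)
    (hjp : IsLeast
      {k : Fin n | M ≤ ∑ s ∈ (Finset.Iic k).erase p, D s (R k)} jp)
    (ρ : ℝ) (hρ : ρ = R jp) :
    ρ ≤ rt jmax ∧ rt jmax ≤ rt i ∧
      ∀ μi : ℝ → ℝ, StrictMono μi → μi (rt i) = 0 → μi ρ ≤ 0 :=
  dr_mechanism_nontargeted_cannot_profit_by_misreporting_general n rt hr δ hδ hδ0 M jmax hjmax i hi
    z d hd hdz e R hR D hD hRmono p hp jp hjp ρ hρ
end
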